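/- For all u, q ≥ 1, q · f(u+1, u^{q-1}) = 2u · f(u^q, 1), where (u+1, u^{q-1}) has first part u+1 and q−1 parts u, and (u^q, 1) has q parts u and one part 1. Consequently, if q > 2u then f(u^q, 1) > f(u+1, u^{q-1}). -/

import Mathlib

/-- The odd double factorial `(2k-1)!! = 1 * 3 * ... * (2k-1)`, with `odf 0 = 1`. -/
def odf (k : Nat) : Int := ∏ j ∈ Finset.Icc 1 k, (2 * (j : Int) - 1)

/-- Subtract `k` from every part, deleting parts that become zero. -/
def subHat (k : Nat) (l : List Nat) : List Nat :=
  (l.map (fun x => x - k)).filter (fun x => x ≠ 0)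

/-- `l` is a partition: a non-increasing list of positive integers. -/
def IsPartition (l : List Nat) : Prop := l.Chain' (· ≥ ·) ∧ ∀ x ∈ l, 0 < x

/-- Increase the `i`-th part (1-based indexing). -/
def upAt (i : Nat) (l : List Nat) : List Nat := l.set (i - 1) (l.getD (i - 1) 0 + 1)

/-- Decrease the `j`-th part (1-based indexing), deleting it if it becomes zero. -/
def downAt (j : Nat) (l : List Nat) : List Nat :=
  (l.set (j - 1) (l.getD (j - 1) 0 - 1)).filter (fun x => x ≠ 0)

/-!
Read sequences `ℕ → ℤ` as exponential generating functions, so that `binomConv` is their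
product. Then `odf` is `O = (1 - 2t)^(-1/2)`, and the recursion for `f` says that multiplying by
`O` adds a part: `f(v^(q+1)) = [t^v/v!] O^q D` and `f(u+1, u^q) = [t^u/u!] O^q D'`, where `D`
is the generating function of `d`. The recurrence for `d` amounts to `O² D = D' + D` and
`D' = 2t O² D`; together with `O³ = O'` these give `(O^q D)' + O^q D = (q+1) O^(q+2) D`.
Hence `f(u+1, u^(q-1)) = 2u c` and `f(u^q, 1) = q c` with
`c = [t^(u-1)/(u-1)!] O^(q+1) D > 0`.
-/

open Finset

@[simp]
lemma odf_zero : odf 0 = 1 := by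
  simp [odf]

@[simp]
lemma odf_one : odf 1 = 1 := by
  simp [odf]

lemma odf_succ (k : ℕ) : odf (k + 1) = (2 * k + 1) * odf k := by
  rw [odf, odf, prod_Icc_succ_top (by omega)]
  push_cast
  ring

lemma odf_pos (k : ℕ) : 0 < odf k :=
  prod_pos fun j hj => by have := (mem_Icc.mp hj).1; omega

def binomConv (x y : ℕ → ℤ) (n : ℕ) : ℤ :=
  ∑ k ∈ range (n + 1), n.choose k * x k * y (n - k)

section BinomConv

variable (x y z : ℕ → ℤ)

@[simp]
lemma binomConv_zero : binomConv x y 0 = x 0 * y 0 := by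
  simp [binomConv]

lemma binomConv_succ (n : ℕ) :
    binomConv x y (n + 1) =
      binomConv (fun k => x (k + 1)) y n + binomConv x (fun k => y (k + 1)) n := by
  have h := sum_choose_succ_mul (fun i j => x i * y j) n
  simp only [← mul_assoc] at h
  rw [binomConv, h, add_comm, binomConv, binomConv]
  congr 1
  refine sum_congr rfl fun k hk => ?_
  rw [Nat.sub_add_comm (Nat.le_of_lt_succ (mem_range.mp hk))]

lemma binomConv_sub_right (n : ℕ) :
    binomConv x (fun k => y k - z k) n = binomConv x y n - binomConv x z n := by
  simp only [binomConv, mul_sub, sum_sub_distrib]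

lemma binomConv_const_mul_right (c : ℤ) (n : ℕ) :
    binomConv x (fun k => c * y k) n = c * binomConv x y n := by
  simp only [binomConv, mul_sum]
  exact sum_congr rfl fun _ _ => by ring

lemma binomConv_assoc :
    binomConv x (binomConv y z) = binomConv (binomConv x y) z := by
  funext n
  simp only [binomConv, mul_sum, sum_mul]
  rw [sum_sigma', sum_sigma']
  refine sum_nbij' (fun p => ⟨p.1 + p.2, p.1⟩) (fun p => ⟨p.2, p.1 - p.2⟩) ?_ ?_ ?_ ?_ ?_
  · rintro ⟨k, j⟩ h
    simp only [mem_sigma, mem_range] at h ⊢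
    omega
  · rintro ⟨m, k⟩ h
    simp only [mem_sigma, mem_range] at h ⊢
    omega
  · rintro ⟨k, j⟩ -
    simp
  · rintro ⟨m, k⟩ h
    simp only [mem_sigma, mem_range] at h
    simp only [Nat.add_sub_cancel' (Nat.le_of_lt_succ h.2)]
  · rintro ⟨k, j⟩ h
    simp only [mem_sigma, mem_range] at h
    have hc : (n.choose (k + j) * (k + j).choose k : ℤ) = n.choose k * (n - k).choose j := by
      exact_mod_cast Nat.add_sub_cancel_left k j ▸ Nat.choose_mul (n := n) (Nat.le_add_right k j)
    simp only [Nat.add_sub_cancel_left, Nat.sub_sub]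
    linear_combination (x k * y j * z (n - (k + j))) * hc.symm

lemma binomConv_succ_of_recurrence (a b c : ℤ) (hx : ∀ k, x (k + 1) = (a * k + b) * x k)
    (hy : ∀ k, y (k + 1) = (a * k + c) * y k) (n : ℕ) :
    binomConv x y (n + 1) = (a * n + b + c) * binomConv x y n := by
  rw [binomConv_succ, binomConv, binomConv, binomConv, ← sum_add_distrib, mul_sum]
  refine sum_congr rfl fun k hk => ?_
  have hkn : k ≤ n := Nat.le_of_lt_succ (mem_range.mp hk)
  rw [hx, hy, Nat.cast_sub hkn]
  ring

lemma binomConv_mul_pred (c : ℤ) (n : ℕ) :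
    binomConv x (fun k => c * k * y (k - 1)) n = c * n * binomConv x y (n - 1) := by
  cases n with
  | zero => simp
  | succ n =>
    rw [binomConv, sum_range_succ, Nat.sub_self, add_tsub_cancel_right, binomConv, mul_sum]
    simp only [Nat.cast_zero, mul_zero, zero_mul, add_zero]
    refine sum_congr rfl fun k hk => ?_
    have hkn : k ≤ n := Nat.le_of_lt_succ (mem_range.mp hk)
    have hc : (n.choose k * (n + 1) : ℤ) = (n + 1).choose k * (n + 1 - k : ℕ) := by
      exact_mod_cast Nat.choose_mul_succ_eq n k
    rw [show n + 1 - k - 1 = n - k by omega]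
    push_cast
    linear_combination (-c * x k * y (n - k)) * hc

lemma binomConv_succ_of_recurrence_left (c : ℤ)
    (hx : ∀ k, x (k + 1) = c * (k + 1) * x k) (n : ℕ) :
    binomConv x y (n + 1) = x 0 * y (n + 1) + c * (n + 1) * binomConv x y n := by
  rw [binomConv, sum_range_succ', binomConv, mul_sum, add_comm]
  simp only [Nat.choose_zero_right, Nat.cast_one, one_mul, Nat.sub_zero,
    Nat.add_sub_add_right]
  congr 1
  refine sum_congr rfl fun k _ => ?_
  have hc : ((n + 1) * n.choose k : ℤ) = (n + 1).choose (k + 1) * (k + 1) := by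
    exact_mod_cast Nat.add_one_mul_choose_eq n k
  rw [hx]
  linear_combination (c * x k * y (n - k)) * hc.symm

end BinomConv

lemma binomConv_odf_odf_succ (n : ℕ) :
    binomConv odf odf (n + 1) = 2 * (n + 1) * binomConv odf odf n := by
  rw [binomConv_succ_of_recurrence odf odf 2 1 1 odf_succ odf_succ]
  ring

lemma binomConv_odf_odf_odf : binomConv odf (binomConv odf odf) = fun k => odf (k + 1) := by
  funext n
  induction n with
  | zero => simp
  | succ n ih =>
    rw [binomConv_succ_of_recurrence odf _ 2 1 2 odf_succ (fun k => by
      rw [binomConv_odf_odf_succ]; ring), ih, odf_succ (n + 1)]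
    push_cast
    ring

lemma iterate_binomConv_odf_zero (y : ℕ → ℤ) (q : ℕ) : ((binomConv odf)^[q] y) 0 = y 0 := by
  induction q with
  | zero => rfl
  | succ q ih => simp [Function.iterate_succ_apply', ih]

lemma binomConv_odf_shift (y : ℕ → ℤ) :
    binomConv (fun k => odf (k + 1)) y = (binomConv odf)^[3] y := by
  rw [← binomConv_odf_odf_odf, ← binomConv_assoc, ← binomConv_assoc]
  rfl

lemma binomConv_odf_pos {y : ℕ → ℤ} (hy : ∀ n, 0 ≤ y n) (hy0 : 0 < y 0) (n : ℕ) :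
    0 < binomConv odf y n := by
  refine sum_pos' (fun k _ => mul_nonneg (mul_nonneg (by positivity) (odf_pos k).le) (hy _))
    ⟨n, self_mem_range_succ n, ?_⟩
  rw [Nat.choose_self, Nat.sub_self]
  have := odf_pos n
  positivity

lemma iterate_binomConv_odf_pos {y : ℕ → ℤ} (hy : ∀ n, 0 ≤ y n) (hy0 : 0 < y 0)
    (q n : ℕ) :
    0 < ((binomConv odf)^[q + 1] y) n := by
  induction q generalizing n with
  | zero => exact binomConv_odf_pos hy hy0 n
  | succ q ih =>
    rw [Function.iterate_succ_apply']
    exact binomConv_odf_pos (fun n => (ih n).le) (ih 0) n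

section Recurrence

variable {d : ℕ → ℤ} (hd1 : d 1 = 0)
  (hrec : ∀ n : ℕ, d (n + 2) = 2 * (n + 1) * (d (n + 1) + d n))
include hd1 hrec

lemma nonneg_of_recurrence (hd0 : 0 ≤ d 0) (n : ℕ) : 0 ≤ d n := by
  induction n using Nat.twoStepInduction with
  | zero => exact hd0
  | one => exact hd1.ge
  | more n h0 h1 => rw [hrec]; positivity

lemma binomConv_odf_odf_of_recurrence (n : ℕ) :
    binomConv (binomConv odf odf) d n = d (n + 1) + d n := by
  induction n with
  | zero => simp [hd1]
  | succ n ih =>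
    rw [binomConv_succ_of_recurrence_left _ _ 2 binomConv_odf_odf_succ, ih, hrec]
    simp only [binomConv_zero, odf_zero, one_mul]
    ring

lemma iterate_add_two_of_recurrence (q n : ℕ) :
    (q + 1) * ((binomConv odf)^[q + 2] d) n =
      ((binomConv odf)^[q] d) (n + 1) + ((binomConv odf)^[q] d) n := by
  induction q generalizing n with
  | zero =>
    simp only [Function.iterate_succ_apply', Function.iterate_zero_apply, binomConv_assoc]
    rw [binomConv_odf_odf_of_recurrence hd1 hrec]
    ring
  | succ q ih =>
    have hshift : (fun k => ((binomConv odf)^[q] d) (k + 1)) =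
        fun k => (q + 1) * ((binomConv odf)^[q + 2] d) k - ((binomConv odf)^[q] d) k := by
      funext k
      rw [ih]
      ring
    have hstep : ((binomConv odf)^[q + 1] d) (n + 1) =
        ((binomConv odf)^[q + 3] d) n + (q + 1) * ((binomConv odf)^[q + 3] d) n -
          ((binomConv odf)^[q + 1] d) n := by
      rw [Function.iterate_succ_apply', binomConv_succ, hshift, binomConv_sub_right,
        binomConv_const_mul_right, binomConv_odf_shift, ← Function.iterate_add_apply,
        add_comm 3 q]
      simp only [Function.iterate_succ_apply']
      ring
    rw [hstep]
    push_cast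
    ring

lemma iterate_shift_of_recurrence (q n : ℕ) :
    ((binomConv odf)^[q] (fun k => d (k + 1))) n = 2 * n * ((binomConv odf)^[q + 2] d) (n - 1) := by
  induction q generalizing n with
  | zero =>
    simp only [Function.iterate_succ_apply', Function.iterate_zero_apply, binomConv_assoc]
    cases n with
    | zero => simp [hd1]
    | succ n =>
      rw [binomConv_odf_odf_of_recurrence hd1 hrec, hrec]
      push_cast
      ring_nf
  | succ q ih =>
    rw [Function.iterate_succ_apply', funext ih, binomConv_mul_pred,
      ← Function.iterate_succ_apply' (binomConv odf)]

end Recurrence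

lemma isPartition_cons_replicate_append {a b c : ℕ} (hba : b ≤ a) (hcb : c ≤ b) (hc : 0 < c)
    (n : ℕ) : IsPartition (a :: List.replicate n b ++ [c]) := by
  refine ⟨List.isChain_iff_pairwise.mpr ?_, ?_⟩
  · simp only [List.cons_append, List.pairwise_cons, List.pairwise_append, List.mem_append,
      List.mem_replicate, List.mem_singleton, List.pairwise_replicate]
    grind
  · simp only [List.cons_append, List.mem_cons, List.mem_append, List.mem_replicate]
    grind

lemma pos_of_mem_cons_replicate {a b n x : ℕ} (ha : 0 < a) (hb : 0 < b)
    (hx : x ∈ a :: List.replicate n b) : 0 < x := by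
  rcases List.mem_cons.mp hx with rfl | hx
  · exact ha
  · exact List.eq_of_mem_replicate hx ▸ hb

lemma subHat_zero_of_pos {l : List ℕ} (hl : ∀ x ∈ l, 0 < x) : subHat 0 l = l := by
  simp only [subHat, Nat.sub_zero, List.map_id']
  exact List.filter_eq_self.mpr fun x hx => by simpa using (hl x hx).ne'

lemma subHat_cons_replicate (e q : ℕ) {k w : ℕ} (hkw : k ≤ w) :
    subHat k ((w + e) :: List.replicate q w) =
      subHat 0 ((w - k + e) :: List.replicate q (w - k)) := by
  simp only [subHat, List.map_cons, List.map_replicate, Nat.sub_zero]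
  rw [Nat.sub_add_comm hkw]

section Recursion

variable {d : ℕ → ℤ} (hd0 : d 0 = 1) {f : List ℕ → ℤ} (hf0 : f [] = 1)
  (hf1 : ∀ m : ℕ, f [m] = d m)
  (hfr : ∀ l : List ℕ, IsPartition l → 2 ≤ l.length →
    f l = f l.dropLast + ∑ k ∈ Icc 1 (l.getLastD 0),
      ((l.getLastD 0).choose k : ℤ) * odf k * f (subHat k l.dropLast))

include hfr in
/-- The `k = 0` term of the recursion is `f l`, so it is a binomial sum over `0 ≤ k ≤ r`. -/
lemma f_append_singleton {l : List ℕ} {r : ℕ} (hl : IsPartition (l ++ [r])) (hne : l ≠ []) :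
    f (l ++ [r]) = ∑ k ∈ range (r + 1), (r.choose k : ℤ) * odf k * f (subHat k l) := by
  have hpart : IsPartition l :=
    ⟨hl.1.sublist (List.sublist_append_left l [r]), fun x hx => hl.2 x (by simp [hx])⟩
  rw [hfr _ hl (by simpa [Nat.succ_le_iff, List.length_pos_iff] using hne),
    List.dropLast_concat, List.getLastD_concat, Nat.range_succ_eq_Icc_zero,
    ← add_sum_Ioc_eq_sum_Icc (Nat.zero_le r), ← Icc_add_one_left_eq_Ioc, zero_add,
    subHat_zero_of_pos hpart.2]
  simp

include hd0 hf0 hf1 hfr in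
lemma f_subHat_cons_replicate (e q : ℕ) {k w : ℕ} (hkw : k ≤ w) :
    f (subHat k ((w + e) :: List.replicate q w)) =
      ((binomConv odf)^[q] (fun n => d (n + e))) (w - k) := by
  have hsingle : ∀ n, f (subHat 0 [n]) = d n := by
    rintro (_ | n)
    · simp [subHat, hf0, hd0]
    · simp [subHat, hf1]
  induction q generalizing k w with
  | zero => rw [subHat_cons_replicate e 0 hkw, List.replicate_zero, hsingle]; rfl
  | succ q ih =>
    rw [subHat_cons_replicate e _ hkw]
    obtain hm | hm := Nat.eq_zero_or_pos (w - k)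
    · rw [hm, iterate_binomConv_odf_zero, zero_add, ← hsingle]
      simp [subHat, List.filter_cons]
    have hpart := isPartition_cons_replicate_append (Nat.le_add_right _ e) le_rfl hm q
    rw [subHat_zero_of_pos fun _ => pos_of_mem_cons_replicate (by omega) hm,
      List.replicate_succ', ← List.cons_append,
      f_append_singleton hfr hpart (List.cons_ne_nil _ _), Function.iterate_succ_apply', binomConv]
    refine sum_congr rfl fun j hj => ?_
    rw [ih (Nat.le_of_lt_succ (mem_range.mp hj))]

include hd0 hf0 hf1 hfr in
lemma f_subHat_replicate (q : ℕ) {k w : ℕ} (hkw : k ≤ w) :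
    f (subHat k (List.replicate (q + 1) w)) = ((binomConv odf)^[q] d) (w - k) := by
  rw [List.replicate_succ]
  exact f_subHat_cons_replicate hd0 hf0 hf1 hfr 0 q hkw

include hd0 hf0 hf1 hfr in
lemma f_cons_replicate (q : ℕ) {w : ℕ} (hw : 0 < w) :
    f ((w + 1) :: List.replicate q w) = ((binomConv odf)^[q] (fun n => d (n + 1))) w := by
  rw [← subHat_zero_of_pos fun _ => pos_of_mem_cons_replicate (Nat.succ_pos w) hw]
  exact f_subHat_cons_replicate hd0 hf0 hf1 hfr 1 q (Nat.zero_le w)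

include hd0 hf0 hf1 hfr in
lemma f_replicate_append_one (q : ℕ) {w : ℕ} (hw : 1 ≤ w) :
    f (List.replicate (q + 1) w ++ [1]) =
      ((binomConv odf)^[q] d) w + ((binomConv odf)^[q] d) (w - 1) := by
  have hpart : IsPartition (List.replicate (q + 1) w ++ [1]) :=
    isPartition_cons_replicate_append le_rfl hw Nat.one_pos q
  rw [f_append_singleton hfr hpart (by simp), sum_range_succ, sum_range_one,
    f_subHat_replicate hd0 hf0 hf1 hfr q (Nat.zero_le _),
    f_subHat_replicate hd0 hf0 hf1 hfr q hw]
  simp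

end Recursion

theorem stmt16
    (d : Nat → Int) (hd0 : d 0 = 1) (hd1 : d 1 = 0)
    (hd : ∀ n : Nat, 2 ≤ n → d n = 2 * ((n : Int) - 1) * (d (n - 1) + d (n - 2)))
    (f : List Nat → Int) (hf0 : f [] = 1) (hf1 : ∀ m : Nat, f [m] = d m)
    (hfr : ∀ l : List Nat, IsPartition l → 2 ≤ l.length →
      f l = f l.dropLast + ∑ k ∈ Finset.Icc 1 (l.getLastD 0),
        ((l.getLastD 0).choose k : Int) * odf k * f (subHat k l.dropLast)) :
    ∀ u q : Nat, 1 ≤ u → 1 ≤ q →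
      (q : Int) * f ((u + 1) :: List.replicate (q - 1) u)
          = 2 * (u : Int) * f (List.replicate q u ++ [1])
        ∧ (2 * u < q →
            f ((u + 1) :: List.replicate (q - 1) u) < f (List.replicate q u ++ [1])) := by
  intro u q hu hq
  obtain ⟨U, rfl⟩ : ∃ U, u = U + 1 := ⟨u - 1, by omega⟩
  obtain ⟨Q, rfl⟩ : ∃ Q, q = Q + 1 := ⟨q - 1, by omega⟩
  have hrec (n : ℕ) : d (n + 2) = 2 * (n + 1) * (d (n + 1) + d n) := by
    rw [hd (n + 2) le_add_self]
    push_cast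
    ring
  set c := ((binomConv odf)^[Q + 2] d) U
  have hA : f ((U + 1 + 1) :: List.replicate (Q + 1 - 1) (U + 1)) = 2 * (U + 1) * c := by
    rw [Nat.add_sub_cancel, f_cons_replicate hd0 hf0 hf1 hfr Q U.succ_pos,
      iterate_shift_of_recurrence hd1 hrec]
    push_cast
    rfl
  have hB : f (List.replicate (Q + 1) (U + 1) ++ [1]) = (Q + 1) * c := by
    rw [f_replicate_append_one hd0 hf0 hf1 hfr Q (Nat.le_add_left 1 U),
      iterate_add_two_of_recurrence hd1 hrec]
    rfl
  have hc : 0 < c :=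
    iterate_binomConv_odf_pos (nonneg_of_recurrence hd1 hrec (by simp [hd0])) (by simp [hd0])
      (Q + 1) U
  rw [hA, hB]
  push_cast
  exact ⟨by ring, fun hlt => mul_lt_mul_of_pos_right (by exact_mod_cast hlt) hc⟩
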